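/- Let d ≥ 2 be an integer and let Δ ∈ [-log d, 0]. Then M(Δ,d) ≤ -Δ, and the inequality is strict for every Δ ∈ (-log d, 0). -/

import Mathlib

open scoped ENNReal BigOperators

noncomputable section

/-- Binary entropy (natural log), with Lean's convention `Real.log 0 = 0`. -/
def binEntropy' (x : ℝ) : ℝ := -(x * Real.log x) - (1 - x) * Real.log (1 - x)

/-- Binary relative entropy, valued in `[0,∞]`. -/
def binRelEntropy (x y : ℝ) : ℝ≥0∞ :=
  if (y = 0 ∧ 0 < x) ∨ (y = 1 ∧ x < 1) then ⊤
  else ENNReal.ofReal (x * Real.log (x / y) + (1 - x) * Real.log ((1 - x) / (1 - y)))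

/-- `M(Δ,d)`: infimum of binary relative entropies under the entropy-difference constraint. -/
def Mfun (Δ : ℝ) (d : ℕ) : ℝ≥0∞ :=
  sInf {m : ℝ≥0∞ | ∃ s r : ℝ, s ∈ Set.Icc (0:ℝ) (((d:ℝ) - 1) / d) ∧
    r ∈ Set.Icc (0:ℝ) (((d:ℝ) - 1) / d) ∧
    binEntropy' s - binEntropy' r + (s - r) * Real.log ((d:ℝ) - 1) = Δ ∧
    m = binRelEntropy s r}

/-- Shannon entropy of a probability vector on `Fin d` (natural log). -/
def shEntropy {d : ℕ} (p : Fin d → ℝ) : ℝ := ∑ i, -(p i * Real.log (p i))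

/-- Relative entropy between probability vectors on `Fin d`, valued in `[0,∞]`. -/
def relEntropy {d : ℕ} (p q : Fin d → ℝ) : ℝ≥0∞ :=
  if ∀ i, q i = 0 → p i = 0
  then ENNReal.ofReal (∑ i, p i * Real.log (p i / q i))
  else ⊤

/-- `N(d) = sup_{0<r<1/2} r(1-r) (log(((1-r)/r)(d-1)))²`. -/
def Nfun (d : ℕ) : ℝ :=
  sSup {v : ℝ | ∃ r : ℝ, 0 < r ∧ r < 1/2 ∧
    v = r * (1 - r) * (Real.log ((1 - r) / r * ((d:ℝ) - 1)))^2}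

/-! Take `s = 0`. Then `D₂(0‖r) = -log (1 - r)`, and the constraint reads `h(r) = -Δ` for the
`d`-ary entropy `h(r) = H₂(r) + r log (d - 1)`, which is continuous with `h(0) = 0` and
`h((d-1)/d) = log d`; so a feasible `r ∈ [0, (d-1)/d]` exists. Finally
`h(r) + log (1 - r) = r log ((1 - r)(d - 1) / r) ≥ 0` because `r ≤ (d-1)/d` means
`r ≤ (1 - r)(d - 1)`, with equality only at `r = 0` and `r = (d-1)/d`, that is, at `Δ = 0`
and `Δ = -log d`. -/

open Real Set

lemma binEntropy'_eq_binEntropy : binEntropy' = binEntropy := by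
  ext p
  simp only [binEntropy', binEntropy, log_inv]
  ring

lemma binEntropy'_add_mul_log_eq_qaryEntropy (q : ℕ) (p : ℝ) :
    binEntropy' p + p * log ((q : ℝ) - 1) = qaryEntropy q p := by
  rw [binEntropy'_eq_binEntropy, qaryEntropy]
  push_cast
  ring

section

variable {a p : ℝ}

lemma sub_one_div_lt_one (ha : 0 < a) : (a - 1) / a < 1 :=
  (div_lt_one ha).mpr (by linarith)

lemma lt_one_sub_mul_sub_one_iff (ha : 0 < a) : p < (1 - p) * (a - 1) ↔ p < (a - 1) / a := by
  rw [lt_div_iff₀ ha]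
  constructor <;> intro h <;> linarith

lemma le_one_sub_mul_sub_one_iff (ha : 0 < a) : p ≤ (1 - p) * (a - 1) ↔ p ≤ (a - 1) / a := by
  rw [le_div_iff₀ ha]
  constructor <;> intro h <;> linarith

end

section qaryEntropy

variable {q : ℕ} {p : ℝ}

lemma qaryEntropy_sub_one_div (hq : 2 ≤ q) : qaryEntropy q (((q : ℝ) - 1) / q) = log q := by
  have hq1 : (1 : ℝ) < q := by exact_mod_cast hq
  rw [← binEntropy'_add_mul_log_eq_qaryEntropy, binEntropy',
    show (1 : ℝ) - ((q : ℝ) - 1) / q = (q : ℝ)⁻¹ by field_simp; ring,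
    log_div (by linarith) (by linarith), log_inv]
  field_simp
  ring

lemma exists_qaryEntropy_eq (hq : 2 ≤ q) {x : ℝ} (hx : x ∈ Icc 0 (log q)) :
    ∃ p ∈ Icc 0 (((q : ℝ) - 1) / q), qaryEntropy q p = x := by
  have hq1 : (1 : ℝ) < q := by exact_mod_cast hq
  refine intermediate_value_Icc (div_nonneg (by linarith) (by linarith))
    qaryEntropy_continuous.continuousOn ?_
  rwa [qaryEntropy_zero, qaryEntropy_sub_one_div hq]

lemma qaryEntropy_add_log_one_sub (hq : 2 ≤ q) (hp : p < 1) :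
    qaryEntropy q p + log (1 - p) = p * (log ((1 - p) * ((q : ℝ) - 1)) - log p) := by
  have hq1 : (1 : ℝ) < q := by exact_mod_cast hq
  rw [← binEntropy'_add_mul_log_eq_qaryEntropy, binEntropy',
    log_mul (by linarith) (by linarith)]
  ring

lemma neg_log_one_sub_le_qaryEntropy (hq : 2 ≤ q) (hp : p ∈ Icc 0 (((q : ℝ) - 1) / q)) :
    -log (1 - p) ≤ qaryEntropy q p := by
  obtain rfl | hp0 := hp.1.eq_or_lt
  · simp
  have hq0 : (0 : ℝ) < q := by exact_mod_cast (by omega : 0 < q)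
  have hp1 : p < 1 := hp.2.trans_lt (sub_one_div_lt_one hq0)
  have hlog : log p ≤ log ((1 - p) * ((q : ℝ) - 1)) :=
    log_le_log hp0 ((le_one_sub_mul_sub_one_iff hq0).mpr hp.2)
  linarith [qaryEntropy_add_log_one_sub hq hp1, mul_nonneg hp0.le (sub_nonneg.mpr hlog)]

lemma neg_log_one_sub_lt_qaryEntropy (hq : 2 ≤ q) (hp : p ∈ Ioo 0 (((q : ℝ) - 1) / q)) :
    -log (1 - p) < qaryEntropy q p := by
  have hq0 : (0 : ℝ) < q := by exact_mod_cast (by omega : 0 < q)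
  have hp1 : p < 1 := hp.2.trans (sub_one_div_lt_one hq0)
  have hlog : log p < log ((1 - p) * ((q : ℝ) - 1)) :=
    log_lt_log hp.1 ((lt_one_sub_mul_sub_one_iff hq0).mpr hp.2)
  linarith [qaryEntropy_add_log_one_sub hq hp1, mul_pos hp.1 (sub_pos.mpr hlog)]

end qaryEntropy

lemma binRelEntropy_zero_left {r : ℝ} (hr : r < 1) :
    binRelEntropy 0 r = ENNReal.ofReal (-log (1 - r)) := by
  rw [binRelEntropy, if_neg (by rintro (⟨-, h⟩ | ⟨h, -⟩) <;> linarith)]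
  simp [log_inv]

lemma Mfun_le_binRelEntropy {d : ℕ} {Δ s r : ℝ} (hs : s ∈ Icc 0 (((d : ℝ) - 1) / d))
    (hr : r ∈ Icc 0 (((d : ℝ) - 1) / d)) (hsr : qaryEntropy d s - qaryEntropy d r = Δ) :
    Mfun Δ d ≤ binRelEntropy s r := by
  refine sInf_le ⟨s, r, hs, hr, ?_, rfl⟩
  rw [← hsr, ← binEntropy'_add_mul_log_eq_qaryEntropy,
    ← binEntropy'_add_mul_log_eq_qaryEntropy]
  ring

/-- for `Δ ∈ [-log d, 0]`, `M(Δ,d) ≤ -Δ`, strictly on the interior. -/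
theorem Mfun_le_neg (d : ℕ) (hd : 2 ≤ d) (Δ : ℝ)
    (hΔ : Δ ∈ Set.Icc (-Real.log d) 0) :
    Mfun Δ d ≤ ENNReal.ofReal (-Δ) ∧
    (Δ ∈ Set.Ioo (-Real.log d) 0 → Mfun Δ d < ENNReal.ofReal (-Δ)) := by
  obtain ⟨r, hr, hr_eq⟩ :=
    exists_qaryEntropy_eq hd (x := -Δ) ⟨by linarith [hΔ.2], by linarith [hΔ.1]⟩
  have hd0 : (0 : ℝ) < d := by exact_mod_cast (by omega : 0 < d)
  have hr1 : r < 1 := hr.2.trans_lt (sub_one_div_lt_one hd0)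
  have hM : Mfun Δ d ≤ ENNReal.ofReal (-log (1 - r)) := by
    rw [← binRelEntropy_zero_left hr1]
    refine Mfun_le_binRelEntropy ⟨le_rfl, hr.1.trans hr.2⟩ hr ?_
    rw [qaryEntropy_zero, hr_eq, zero_sub, neg_neg]
  refine ⟨hM.trans (ENNReal.ofReal_le_ofReal (hr_eq ▸ neg_log_one_sub_le_qaryEntropy hd hr)),
    fun hΔ' => hM.trans_lt ?_⟩
  have hr0 : r ≠ 0 := by
    rintro rfl
    linarith [hΔ'.2, qaryEntropy_zero d]
  have hr_top : r ≠ ((d : ℝ) - 1) / d := by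
    rintro rfl
    linarith [hΔ'.1, qaryEntropy_sub_one_div hd]
  rw [ENNReal.ofReal_lt_ofReal_iff (by linarith [hΔ'.2]), ← hr_eq]
  exact neg_log_one_sub_lt_qaryEntropy hd ⟨hr.1.lt_of_ne' hr0, hr.2.lt_of_ne hr_top⟩

end
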